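/- In the setting of the previous abstraction (linear τ_+, bilinear pairing ⟨· ·⟩, T(W) = τ_+(W) − ∑_α ⟨W γ^α⟩ γ_α), assume additionally the 'string recursion' identity ⟨T(W) V⟩ = −⟨W τ_+(V)⟩ for all W, V. Then for all k ≥ 0 and all W: T^k(W) = τ_k(W) − ∑_{i=0}^{k-1} (−1)^i ⟨W τ_i(γ^α)⟩ τ_{k-1-i}(γ_α). -/

import Mathlib

/-! Since `τ - T` is the finite-rank map `W ↦ ∑ α, ⟨W, γ^α⟩ γ_α`, the noncommutative telescoping
`τ^k - T^k = ∑ i < k, τ^(k-1-i) (τ - T) T^i` expresses `T^k W` through the pairings `⟨T^i W, γ^α⟩`,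
and iterating the string recursion turns these into `(-1)^i ⟨W, τ^i γ^α⟩`. -/

open Finset

theorem pow_sub_pow_eq_sum_pow_mul_sub_mul_pow {A : Type*} [Ring A] (a b : A) (n : ℕ) :
    a ^ n - b ^ n = ∑ i ∈ range n, a ^ (n - 1 - i) * (a - b) * b ^ i := by
  induction n with
  | zero => simp
  | succ n ih =>
    have hshift : ∀ i ∈ range n, a ^ (n + 1 - 1 - (i + 1)) * (a - b) * b ^ (i + 1)
        = a ^ (n - 1 - i) * (a - b) * b ^ i * b := fun i _ => by
      rw [show n + 1 - 1 - (i + 1) = n - 1 - i by omega, pow_succ, mul_assoc _ (b ^ i)]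
    rw [sum_range_succ', sum_congr rfl hshift, ← sum_mul, ← ih]
    simp only [Nat.add_sub_cancel, Nat.sub_zero, pow_zero, mul_one, pow_succ]
    noncomm_ring

theorem LinearMap.apply_pow_apply_eq_neg_one_pow_mul {R X : Type*} [CommRing R] [AddCommGroup X]
    [Module R X] (p : X →ₗ[R] X →ₗ[R] R) (τ T : X →ₗ[R] X)
    (hstr : ∀ W V : X, p (T W) V = - p W (τ V)) (k : ℕ) (W V : X) :
    p ((T ^ k) W) V = (-1 : R) ^ k * p W ((τ ^ k) V) := by
  induction k generalizing V with
  | zero => simp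
  | succ k ih =>
    rw [pow_succ' T, Module.End.mul_apply, hstr, ih, pow_succ τ, Module.End.mul_apply, pow_succ]
    ring

/-- Equation (22): assuming the string recursion `⟨T(W), V⟩ = -⟨W, τ₊(V)⟩`,
`T^k(W) = τ_k(W) - ∑_{i=0}^{k-1} (-1)^i ⟨W, τ_i(γ^α)⟩ • τ_{k-1-i}(γ_α)`. -/
theorem T_pow_eq_tau_pow_sub_correction
    {R X : Type*} [CommRing R] [AddCommGroup X] [Module R X]
    (N : ℕ) (e e' : Fin N → X)
    (p : X →ₗ[R] X →ₗ[R] R) (τ : X →ₗ[R] X) (T : X →ₗ[R] X)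
    (hT : ∀ W : X, T W = τ W - ∑ α, p W (e' α) • e α)
    (hstr : ∀ W V : X, p (T W) V = - p W (τ V)) :
    ∀ (k : ℕ) (W : X),
      (T ^ k) W = (τ ^ k) W
        - ∑ i ∈ Finset.range k, ∑ α,
            ((-1 : R) ^ i * p W ((τ ^ i) (e' α))) • (τ ^ (k - 1 - i)) (e α) := by
  intro k W
  have hdiff : ∀ V, (τ - T) V = ∑ α, p V (e' α) • e α := fun V => by
    rw [LinearMap.sub_apply, hT, sub_sub_cancel]
  rw [eq_sub_iff_add_eq, add_comm, ← eq_sub_iff_add_eq]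
  calc ∑ i ∈ range k, ∑ α, ((-1 : R) ^ i * p W ((τ ^ i) (e' α))) • (τ ^ (k - 1 - i)) (e α)
      = ∑ i ∈ range k, (τ ^ (k - 1 - i)) ((τ - T) ((T ^ i) W)) := by
        simp only [hdiff, map_sum, map_smul, LinearMap.apply_pow_apply_eq_neg_one_pow_mul p τ T hstr]
    _ = (τ ^ k - T ^ k) W := by
        simp only [pow_sub_pow_eq_sum_pow_mul_sub_mul_pow, LinearMap.sum_apply, Module.End.mul_apply]
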